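/- arXiv:1601.00198 — 3 statements merged into one kernel-verified Lean document; each statement's English description precedes it below -/
import Mathlib

section
/- For every ε > 0 there exists a packing integer program (P) and a partition J of the column index set of A such that the packing interaction graph G^{pack}_{A,J} is a 3-cycle and the super sparse closure optimum satisfies z^{S.S.} ≥ (3 − ε) · z^I. -/
/-!
Take the triangle `x₁ + x₂ ≤ 2t`, `x₁ + x₃ ≤ 2t`, `x₂ + x₃ ≤ 2t` with all variables integer,
objective `x₁ + x₂ + x₃`, and each variable in its own block. For `1/2 ≤ t < 1` two integer
variables cannot both be `1`, so `z^I = 1`. A cut supported on a single variable `x_u` only sees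
the projection of `P^I` to that coordinate, which is `[0, 1]` (witnessed by `t • e_u ∈ P^I`);
hence the LP point `(t, t, t)` survives all super sparse cuts, and `z^{S.S.} ≥ 3t`, which tends
to `3` as `t → 1`.
-/

open Finset

/-- The dot product `cᵀx` of two vectors in `ℚⁿ`. -/
def dotp {n : ℕ} (c x : Fin n → ℚ) : ℚ := ∑ j, c j * x j

/-- The feasible region `P` of the MILP `Ax ≤ b`, `x ≥ 0`, `x_j ∈ ℤ` for `j ∈ L`. -/
def mipSet {m n : ℕ} (A : Matrix (Fin m) (Fin n) ℚ) (b : Fin m → ℚ)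
    (L : Finset (Fin n)) : Set (Fin n → ℚ) :=
  {x | (∀ i, ∑ j, A i j * x j ≤ b i) ∧ (∀ j, 0 ≤ x j) ∧ ∀ j ∈ L, ∃ z : ℤ, x j = (z : ℚ)}

/-- The LP relaxation `P^LP`. -/
def lpSet {m n : ℕ} (A : Matrix (Fin m) (Fin n) ℚ) (b : Fin m → ℚ) : Set (Fin n → ℚ) :=
  {x | (∀ i, ∑ j, A i j * x j ≤ b i) ∧ (∀ j, 0 ≤ x j)}

/-- The integer hull `P^I = conv(P)`. -/
def intHull {m n : ℕ} (A : Matrix (Fin m) (Fin n) ℚ) (b : Fin m → ℚ)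
    (L : Finset (Fin n)) : Set (Fin n → ℚ) :=
  convexHull ℚ (mipSet A b L)

/-- The sparse closure `P^(N)`: the LP relaxation intersected with all halfspaces
`αᵀx ≤ β` that are valid for `P^I` and whose support is contained in `N`. -/
def sparseClosure {m n : ℕ} (A : Matrix (Fin m) (Fin n) ℚ) (b : Fin m → ℚ)
    (L : Finset (Fin n)) (N : Set (Fin n)) : Set (Fin n → ℚ) :=
  lpSet A b ∩
    ⋂ (α : Fin n → ℚ) (β : ℚ)
      (_ : (∀ x ∈ intHull A b L, dotp α x ≤ β) ∧ ∀ j, α j ≠ 0 → j ∈ N),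
      {x | dotp α x ≤ β}

/-- The packing interaction graph of `A` w.r.t. the partition of columns given by
`π : Fin n → Fin q` (part `J_u = π⁻¹(u)`): nodes `u ≠ v` are adjacent iff some row of `A`
has nonzero entries in a column of `J_u` and in a column of `J_v`. -/
def packGraph {m n q : ℕ} (A : Matrix (Fin m) (Fin n) ℚ) (π : Fin n → Fin q) :
    SimpleGraph (Fin q) where
  Adj u v := u ≠ v ∧ ∃ i a₁ a₂, π a₁ = u ∧ π a₂ = v ∧ A i a₁ ≠ 0 ∧ A i a₂ ≠ 0
  symm := by
    constructor
    rintro u v ⟨huv, i, a₁, a₂, h1, h2, h3, h4⟩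
    exact ⟨huv.symm, i, a₂, a₁, h2, h1, h4, h3⟩
  loopless := by
    constructor
    rintro u ⟨h, -⟩
    exact h rfl

/-- The sparse closure `P^(S)` for a set `S` of nodes of the packing interaction graph. -/
def blockClosure {m n q : ℕ} (A : Matrix (Fin m) (Fin n) ℚ) (b : Fin m → ℚ)
    (L : Finset (Fin n)) (π : Fin n → Fin q) (S : Finset (Fin q)) : Set (Fin n → ℚ) :=
  sparseClosure A b L {j | π j ∈ S}

/-- The column block-sparse closure `P^{𝒱,P} = ⋂_{S ∈ 𝒱} P^(S)` for a support list `𝒱`. -/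
def listClosure {m n q : ℕ} (A : Matrix (Fin m) (Fin n) ℚ) (b : Fin m → ℚ)
    (L : Finset (Fin n)) (π : Fin n → Fin q) (𝒱 : Finset (Finset (Fin q))) :
    Set (Fin n → ℚ) :=
  ⋂ S ∈ 𝒱, blockClosure A b L π S

/-- The super sparse closure `P^{S.S.}`: support list of all singletons. -/
def superSparseClosure {m n q : ℕ} (A : Matrix (Fin m) (Fin n) ℚ) (b : Fin m → ℚ)
    (L : Finset (Fin n)) (π : Fin n → Fin q) : Set (Fin n → ℚ) :=
  ⋂ u : Fin q, blockClosure A b L π {u}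

/-- The natural sparse closure `P^{N.S.}`: for each row `i` of `A`, add all cuts supported
on the variables of the blocks touched by row `i`. -/
def naturalSparseClosure {m n q : ℕ} (A : Matrix (Fin m) (Fin n) ℚ) (b : Fin m → ℚ)
    (L : Finset (Fin n)) (π : Fin n → Fin q) : Set (Fin n → ℚ) :=
  ⋂ i : Fin m, sparseClosure A b L {j | ∃ j', π j' = π j ∧ A i j' ≠ 0}

/-- A mixed stable set of `G` subordinate to the collection `𝒱`: a collection `M` of subsets
of vertices, each contained in a member of `𝒱`, pairwise disjoint, with no edge of `G`
between distinct members. -/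
def MixedStableSet {V : Type*} (G : SimpleGraph V) (𝒱 : Set (Finset V))
    (M : Finset (Finset V)) : Prop :=
  (∀ s ∈ M, ∃ t ∈ 𝒱, s ⊆ t) ∧
  (∀ s ∈ M, ∀ t ∈ M, s ≠ t → Disjoint s t) ∧
  (∀ s ∈ M, ∀ t ∈ M, s ≠ t → ∀ u ∈ s, ∀ v ∈ t, ¬ G.Adj u v)

section SparseCuts

variable {m n : ℕ} {A : Matrix (Fin m) (Fin n) ℚ} {b : Fin m → ℚ} {L : Finset (Fin n)}

theorem convex_setOf_dotp_le (α : Fin n → ℚ) (β : ℚ) : Convex ℚ {x | dotp α x ≤ β} :=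
  convex_halfSpace_le ⟨dotProduct_add α, fun c x => dotProduct_smul c α x⟩ β

theorem dotp_le_of_mem_intHull {c : Fin n → ℚ} {z : ℚ}
    (h : ∀ y ∈ mipSet A b L, dotp c y ≤ z) : ∀ x ∈ intHull A b L, dotp c x ≤ z :=
  fun _ hx => convexHull_min h (convex_setOf_dotp_le c z) hx

theorem zero_mem_mipSet (hb : ∀ i, 0 ≤ b i) : (0 : Fin n → ℚ) ∈ mipSet A b L :=
  ⟨fun i => by simpa using hb i, fun _ => le_rfl, fun _ _ => ⟨0, by simp⟩⟩

theorem dotp_congr_of_support_subset {α x y : Fin n → ℚ} {N : Set (Fin n)}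
    (hα : ∀ j, α j ≠ 0 → j ∈ N) (hxy : ∀ j ∈ N, x j = y j) : dotp α x = dotp α y := by
  refine sum_congr rfl fun j _ => ?_
  by_cases hj : α j = 0
  · simp [hj]
  · rw [hxy j (hα j hj)]

theorem mem_sparseClosure_of_eqOn {N : Set (Fin n)} {x y : Fin n → ℚ} (hx : x ∈ lpSet A b)
    (hy : y ∈ intHull A b L) (hxy : ∀ j ∈ N, x j = y j) : x ∈ sparseClosure A b L N := by
  refine ⟨hx, Set.mem_iInter₂.2 fun α β => Set.mem_iInter.2 fun ⟨hvalid, hα⟩ => ?_⟩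
  show dotp α x ≤ β
  rw [dotp_congr_of_support_subset hα hxy]
  exact hvalid y hy

theorem mem_superSparseClosure_of_eqOn {q : ℕ} {π : Fin n → Fin q} {x : Fin n → ℚ}
    (hx : x ∈ lpSet A b) (hy : ∀ u, ∃ y ∈ intHull A b L, ∀ j, π j = u → x j = y j) :
    x ∈ superSparseClosure A b L π := by
  refine Set.mem_iInter.2 fun u => ?_
  obtain ⟨y, hy, hxy⟩ := hy u
  exact mem_sparseClosure_of_eqOn hx hy fun j hj => hxy j (mem_singleton.1 hj)

end SparseCuts

section Triangle

def triangleEdgeMatrix : Matrix (Fin 3) (Fin 3) ℚ := fun i j => if i = j then 0 else 1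

theorem triangleEdgeMatrix_nonneg (i j : Fin 3) : 0 ≤ triangleEdgeMatrix i j := by
  unfold triangleEdgeMatrix; split_ifs <;> norm_num

theorem triangleEdgeMatrix_row_sum (i : Fin 3) (x : Fin 3 → ℚ) :
    ∑ j, triangleEdgeMatrix i j * x j = ∑ j, x j - x i := by
  fin_cases i <;> simp [triangleEdgeMatrix, Fin.sum_univ_three] <;> ring

theorem packGraph_triangleEdgeMatrix : packGraph triangleEdgeMatrix id = ⊤ := by
  ext u v
  refine ⟨And.left, fun huv => ⟨huv, ?_⟩⟩
  obtain ⟨w, hwu, hwv⟩ : ∃ w : Fin 3, w ≠ u ∧ w ≠ v := by revert u v; decide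
  exact ⟨w, u, v, rfl, rfl, by simp [triangleEdgeMatrix, hwu], by simp [triangleEdgeMatrix, hwv]⟩

variable {t : ℚ}

theorem sum_le_one_of_mem_mipSet_triangle (ht : t < 1) {y : Fin 3 → ℚ}
    (hy : y ∈ mipSet triangleEdgeMatrix (fun _ => 2 * t) univ) : ∑ j, y j ≤ 1 := by
  obtain ⟨hrow, -, hint⟩ := hy
  choose z hz using fun j => hint j (mem_univ j)
  have hpair : ∀ i, ∑ j, z j - z i < 2 := fun i => by
    have := (hrow i).trans_lt (show 2 * t < 2 by linarith)
    rw [triangleEdgeMatrix_row_sum] at this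
    simp only [hz] at this
    exact_mod_cast this
  -- integrality turns `< 2` into `≤ 1` for each pair, and the three pairs give `2 ∑ z ≤ 3`
  have hsum : ∑ j, z j ≤ 1 := by
    have h0 := hpair 0; have h1 := hpair 1; have h2 := hpair 2
    simp only [Fin.sum_univ_three] at h0 h1 h2 ⊢
    omega
  simp only [hz]
  exact_mod_cast hsum

theorem single_mem_mipSet_triangle (ht : 1 / 2 ≤ t) (u : Fin 3) :
    Pi.single u 1 ∈ mipSet triangleEdgeMatrix (fun _ => 2 * t) univ := by
  refine ⟨fun i => ?_, fun j => ?_, fun j _ => ⟨(Pi.single u 1 : Fin 3 → ℤ) j, ?_⟩⟩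
  · rw [triangleEdgeMatrix_row_sum, sum_pi_single', Pi.single_apply]
    split_ifs <;> linarith
  · rw [Pi.single_apply]
    split_ifs <;> norm_num
  · rw [Pi.single_apply, Pi.single_apply]
    split_ifs <;> norm_num

theorem const_mem_lpSet_triangle (ht : 0 ≤ t) :
    (fun _ => t) ∈ lpSet triangleEdgeMatrix (fun _ => 2 * t) :=
  ⟨fun i => by rw [triangleEdgeMatrix_row_sum, Fin.sum_univ_three]; linarith, fun _ => ht⟩

theorem const_mem_superSparseClosure_triangle (ht : 1 / 2 ≤ t) (ht' : t ≤ 1) :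
    (fun _ => t) ∈ superSparseClosure triangleEdgeMatrix (fun _ => 2 * t) univ id := by
  have hb : ∀ _ : Fin 3, (0 : ℚ) ≤ 2 * t := fun _ => by linarith
  refine mem_superSparseClosure_of_eqOn (const_mem_lpSet_triangle (by linarith)) fun u =>
    ⟨t • Pi.single u 1, ?_, fun j hj => by simp [← hj]⟩
  exact (convex_convexHull ℚ _).smul_mem_of_zero_mem
    (subset_convexHull ℚ _ (zero_mem_mipSet hb))
    (subset_convexHull ℚ _ (single_mem_mipSet_triangle ht u)) ⟨by linarith, ht'⟩

end Triangle

/-- **Theorem (tightness for 3-cycles, super sparse cuts).** For every `ε > 0` there is a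
packing integer program and a column partition whose packing interaction graph is a
3-cycle, with `z^{S.S.} ≥ (3 - ε) · z^I`. -/
theorem packing_superSparse_threeCycle_tight (ε : ℚ) (hε : 0 < ε) :
    ∃ (m n : ℕ) (A : Matrix (Fin m) (Fin n) ℚ) (b : Fin m → ℚ) (c : Fin n → ℚ)
      (L : Finset (Fin n)) (π : Fin n → Fin 3),
      (∀ i j, 0 ≤ A i j) ∧ (∀ i, 0 ≤ b i) ∧ (∀ j, 0 ≤ c j) ∧
      Function.Surjective π ∧
      Nonempty (packGraph A π ≃g SimpleGraph.cycleGraph 3) ∧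
      ∃ xI ∈ intHull A b L,
        (∀ x ∈ intHull A b L, dotp c x ≤ dotp c xI) ∧
        ∃ xS ∈ superSparseClosure A b L π, (3 - ε) * dotp c xI ≤ dotp c xS := by
  set t : ℚ := max (1 / 2) (1 - ε / 3)
  have ht_half : 1 / 2 ≤ t := le_max_left _ _
  have ht_eps : 1 - ε / 3 ≤ t := le_max_right _ _
  have ht_lt : t < 1 := max_lt (by norm_num) (by linarith)
  have hdot_sum : ∀ x : Fin 3 → ℚ, dotp (fun _ => 1) x = ∑ j, x j := fun x => by simp [dotp]
  have hxI : dotp (fun _ => 1) (Pi.single 0 1 : Fin 3 → ℚ) = 1 := by simp [hdot_sum]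
  refine ⟨3, 3, triangleEdgeMatrix, fun _ => 2 * t, fun _ => 1, univ, id,
    triangleEdgeMatrix_nonneg, fun _ => by linarith, fun _ => zero_le_one,
    Function.surjective_id, ⟨?_⟩, Pi.single 0 1,
    subset_convexHull ℚ _ (single_mem_mipSet_triangle ht_half 0), ?_, fun _ => t,
    const_mem_superSparseClosure_triangle ht_half ht_lt.le, ?_⟩
  · rw [packGraph_triangleEdgeMatrix, SimpleGraph.cycleGraph_three_eq_top]
  · rw [hxI]
    exact dotp_le_of_mem_intHull fun y hy =>
      (hdot_sum y).trans_le (sum_le_one_of_mem_mipSet_triangle ht_lt hy)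
  · rw [hxI, hdot_sum, Fin.sum_univ_three]
    linarith
end

section
/- Consider a packing integer program (P) and a partition J of the column index set of A such that the packing interaction graph G^{pack}_{A,J} is a tree with maximum degree Δ ≥ 1. Then the natural sparse closure optimum satisfies z^{N.S.} ≤ ((2Δ − 1)/Δ) · z^I. -/
open Finset

/-!
Colour the blocks with `2Δ - 1` colours, `Δ` colours per block, so that every colour class is a
dissociation set of the tree (it induces a subgraph of maximum degree one). Such a colouring is
built greedily, one vertex `ℓ` at a time, where `ℓ` (farthest from a root) has at most one
coloured neighbour `u`: `ℓ` gets the `Δ - 1` colours missing at `u` together with one colour of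
`u` that no other neighbour of `u` carries; it exists because `u` has at most `Δ - 1` other
neighbours, each sharing at most one colour with `u`.

A colour class splits into single blocks and tree edges, pairwise non-adjacent, each inside the
support of a row. On each piece `x` satisfies the sparse cut bounding the objective restricted
to that piece by its supremum over `P`. Feasible points chosen separately on the pieces glue to
a feasible point because no row meets two pieces, so these suprema add up to at most `z^I`.
Summing over the colours counts every block `Δ` times.
-/

theorem Finset.sum_le_of_forall_sum_le {ι α β : Type*} [DecidableEq ι] [Nonempty α]
    [AddCommGroup β] [PartialOrder β] [IsOrderedAddMonoid β]
    (s : Finset ι) (Y : ι → Set α) (g : ι → α → β) (a : ι → β)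
    (ha : ∀ i ∈ s, ∀ r, (∀ y ∈ Y i, g i y ≤ r) → a i ≤ r) {z : β}
    (hz : ∀ y : ι → α, (∀ i ∈ s, y i ∈ Y i) → ∑ i ∈ s, g i (y i) ≤ z) :
    ∑ i ∈ s, a i ≤ z := by
  induction s using Finset.induction_on generalizing z with
  | empty => simpa using hz (fun _ => Classical.arbitrary α)
  | insert i s hi ih =>
    rw [sum_insert hi, ← le_sub_iff_add_le']
    refine ih (fun j hj => ha j (mem_insert_of_mem hj)) fun y hy => ?_
    rw [le_sub_comm]
    refine ha i (mem_insert_self i s) _ fun yi hyi => ?_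
    have hupd := hz (Function.update y i yi) fun j hj => by
      obtain rfl | hj := mem_insert.1 hj
      · simpa using hyi
      · rw [Function.update_of_ne (ne_of_mem_of_not_mem hj hi)]
        exact hy j hj
    rw [sum_insert hi, Function.update_self,
      sum_congr rfl fun j hj => by rw [Function.update_of_ne (ne_of_mem_of_not_mem hj hi)]]
      at hupd
    exact le_sub_iff_add_le.2 hupd

section Packing

variable {m n q : ℕ} {A : Matrix (Fin m) (Fin n) ℚ} {b : Fin m → ℚ} {L : Finset (Fin n)}
  {π : Fin n → Fin q}

theorem isLinearMap_dotp (α : Fin n → ℚ) : IsLinearMap ℚ (dotp α) :=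
  ⟨dotProduct_add α, fun r x => dotProduct_smul r α x⟩

theorem dotp_sum {ι : Type*} (α : Fin n → ℚ) (s : Finset ι) (y : ι → Fin n → ℚ) :
    dotp α (∑ i ∈ s, y i) = ∑ i ∈ s, dotp α (y i) :=
  dotProduct_sum α s y

def blockPart (π : Fin n → Fin q) (S : Finset (Fin q)) (y : Fin n → ℚ) : Fin n → ℚ :=
  fun j => if π j ∈ S then y j else 0

def rowBlocks (A : Matrix (Fin m) (Fin n) ℚ) (π : Fin n → Fin q) (i : Fin m) :
    Finset (Fin q) :=
  univ.filter fun u => ∃ j, π j = u ∧ A i j ≠ 0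

theorem blockPart_univ (y : Fin n → ℚ) : blockPart π univ y = y := by
  ext j
  simp [blockPart]

theorem dotp_blockPart_comm (S : Finset (Fin q)) (c y : Fin n → ℚ) :
    dotp (blockPart π S c) y = dotp c (blockPart π S y) :=
  sum_congr rfl fun j _ => by unfold blockPart; split_ifs <;> simp

theorem sum_dotp_blockPart_singleton (S : Finset (Fin q)) (c y : Fin n → ℚ) :
    ∑ u ∈ S, dotp (blockPart π {u} c) y = dotp (blockPart π S c) y := by
  unfold dotp blockPart
  rw [sum_comm]
  refine sum_congr rfl fun j _ => ?_
  simp only [mem_singleton, ite_mul, zero_mul]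
  rw [sum_ite_eq]

theorem dotp_blockPart_eq_zero {S : Finset (Fin q)} {α y : Fin n → ℚ}
    (hα : ∀ j, π j ∈ S → α j = 0) : dotp α (blockPart π S y) = 0 :=
  sum_eq_zero fun j _ => by unfold blockPart; split_ifs with h <;> simp [hα j, h]

theorem dotp_blockPart_le (S : Finset (Fin q)) {α y : Fin n → ℚ} (hα : ∀ j, 0 ≤ α j)
    (hy : ∀ j, 0 ≤ y j) : dotp α (blockPart π S y) ≤ dotp α y :=
  sum_le_sum fun j _ => by
    unfold blockPart; split_ifs
    · rfl
    · simpa using mul_nonneg (hα j) (hy j)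

theorem mem_rowBlocks {i : Fin m} {u : Fin q} :
    u ∈ rowBlocks A π i ↔ ∃ j, π j = u ∧ A i j ≠ 0 := by
  simp [rowBlocks]

theorem MixedStableSet.eq_of_mem_rowBlocks {𝒱 : Set (Finset (Fin q))}
    {M : Finset (Finset (Fin q))} (hM : MixedStableSet (packGraph A π) 𝒱 M)
    {S T : Finset (Fin q)} (hS : S ∈ M) (hT : T ∈ M) {i : Fin m} {u v : Fin q}
    (huS : u ∈ S) (hvT : v ∈ T) (hu : u ∈ rowBlocks A π i) (hv : v ∈ rowBlocks A π i) :
    S = T := by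
  by_contra hST
  obtain ⟨j, rfl, hj⟩ := mem_rowBlocks.1 hu
  obtain ⟨j', rfl, hj'⟩ := mem_rowBlocks.1 hv
  by_cases huv : π j = π j'
  · exact Finset.disjoint_left.1 (hM.2.1 S hS T hT hST) huS (huv ▸ hvT)
  · exact hM.2.2 S hS T hT hST _ huS _ hvT ⟨huv, i, j, j', rfl, rfl, hj, hj'⟩

theorem MixedStableSet.sum_blockPart_mem_mipSet (hA : ∀ i j, 0 ≤ A i j) (hb : ∀ i, 0 ≤ b i)
    {𝒱 : Set (Finset (Fin q))} {M : Finset (Finset (Fin q))}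
    (hM : MixedStableSet (packGraph A π) 𝒱 M) {y : Finset (Fin q) → Fin n → ℚ}
    (hy : ∀ S ∈ M, y S ∈ mipSet A b L) : ∑ S ∈ M, blockPart π S (y S) ∈ mipSet A b L := by
  refine ⟨fun i => ?_, fun j => ?_, fun j hj => ?_⟩
  · change dotp (A i) _ ≤ b i
    rw [dotp_sum]
    by_cases hrow : ∃ S₀ ∈ M, ∃ u ∈ S₀, u ∈ rowBlocks A π i
    · obtain ⟨S₀, hS₀, u, huS₀, hu⟩ := hrow
      rw [sum_eq_single_of_mem S₀ hS₀ fun T hT hTS₀ => dotp_blockPart_eq_zero fun j hjT => ?_]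
      · exact (dotp_blockPart_le S₀ (hA i) (hy S₀ hS₀).2.1).trans ((hy S₀ hS₀).1 i)
      · by_contra hj
        exact hTS₀ (hM.eq_of_mem_rowBlocks hT hS₀ hjT huS₀ (mem_rowBlocks.2 ⟨j, rfl, hj⟩) hu)
    · push Not at hrow
      rw [sum_eq_zero fun S hS => dotp_blockPart_eq_zero fun j hjS => ?_]
      · exact hb i
      · by_contra hj
        exact hrow S hS (π j) hjS (mem_rowBlocks.2 ⟨j, rfl, hj⟩)
  · rw [Finset.sum_apply]
    exact sum_nonneg fun S hS => by
      unfold blockPart; split_ifs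
      · exact (hy S hS).2.1 j
      · rfl
  · rw [Finset.sum_apply]
    refine sum_induction _ (fun r : ℚ => ∃ k : ℤ, r = k) ?_ ⟨0, by simp⟩ fun S hS => ?_
    · rintro _ _ ⟨k, rfl⟩ ⟨k', rfl⟩
      exact ⟨k + k', by push_cast; ring⟩
    · unfold blockPart; split_ifs
      · exact (hy S hS).2.2 j hj
      · exact ⟨0, by simp⟩

theorem dotp_le_of_mem_naturalSparseClosure {x : Fin n → ℚ}
    (hx : x ∈ naturalSparseClosure A b L π) (i : Fin m) {α : Fin n → ℚ} {β : ℚ}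
    (hα : ∀ j, α j ≠ 0 → π j ∈ rowBlocks A π i) (hvalid : ∀ y ∈ mipSet A b L, dotp α y ≤ β) :
    dotp α x ≤ β := by
  have hhull : ∀ y ∈ intHull A b L, dotp α y ≤ β := fun y hy =>
    convexHull_min hvalid (convex_halfSpace_le (isLinearMap_dotp α) β) hy
  have hcuts := (Set.mem_iInter.1 hx i).2
  simp only [Set.mem_iInter] at hcuts
  exact hcuts α β ⟨hhull, fun j hj => mem_rowBlocks.1 (hα j hj)⟩

theorem sum_dotp_blockPart_le_of_mem_naturalSparseClosure (hA : ∀ i j, 0 ≤ A i j)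
    (hb : ∀ i, 0 ≤ b i) {c x : Fin n → ℚ} (hx : x ∈ naturalSparseClosure A b L π)
    {M : Finset (Finset (Fin q))}
    (hM : MixedStableSet (packGraph A π) (Set.range (rowBlocks A π)) M) {z : ℚ}
    (hz : ∀ y ∈ mipSet A b L, dotp c y ≤ z) :
    ∑ S ∈ M, dotp (blockPart π S c) x ≤ z := by
  refine M.sum_le_of_forall_sum_le (fun _ => mipSet A b L) (fun S => dotp (blockPart π S c)) _
    (fun S hS r hr => ?_) fun y hy => ?_
  · obtain ⟨_, ⟨i, rfl⟩, hSi⟩ := hM.1 S hS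
    refine dotp_le_of_mem_naturalSparseClosure hx i (fun j hj => hSi ?_) hr
    by_contra hjS
    exact hj (if_neg hjS)
  · simp only [dotp_blockPart_comm, ← dotp_sum]
    exact hz _ (hM.sum_blockPart_mem_mipSet hA hb hy)

end Packing

namespace SimpleGraph

variable {V κ : Type*} (G : SimpleGraph V)

def IsDissociationSet (U : Set V) : Prop :=
  ∀ v ∈ U, (G.neighborSet v ∩ U).Subsingleton

/-- `card_inter_le_one` is the invariant that keeps the greedy extension going: a vertex loses
at most one free colour to each neighbour. -/
structure IsDissociationColoringOn [DecidableEq κ] (Δ : ℕ) (C : V → Finset κ) (S : Set V) :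
    Prop where
  card_eq : ∀ v ∈ S, (C v).card = Δ
  card_inter_le_one : ∀ v ∈ S, ∀ w ∈ S, G.Adj v w → (C v ∩ C w).card ≤ 1
  isDissociationSet : ∀ s, G.IsDissociationSet {v | v ∈ S ∧ s ∈ C v}

variable {G}

theorem IsTree.eq_of_adj_of_dist_add_one_eq {r v w w' : V} (hG : G.IsTree)
    (hw : G.Adj w v) (hw' : G.Adj w' v)
    (hdw : G.dist r w + 1 = G.dist r v) (hdw' : G.dist r w' + 1 = G.dist r v) : w = w' := by
  obtain ⟨p, hp⟩ := hG.connected.exists_walk_length_eq_dist r w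
  obtain ⟨p', hp'⟩ := hG.connected.exists_walk_length_eq_dist r w'
  have hpath : (p.concat hw).IsPath :=
    Walk.isPath_of_length_eq_dist _ (by rw [Walk.length_concat, hp, hdw])
  have hpath' : (p'.concat hw').IsPath :=
    Walk.isPath_of_length_eq_dist _ (by rw [Walk.length_concat, hp', hdw'])
  have h := (hG.isAcyclic.subsingleton_path r v).elim ⟨_, hpath⟩ ⟨_, hpath'⟩
  exact (Walk.concat_inj (Subtype.ext_iff.mp h)).1

/-- A vertex of `S` farthest from a fixed root has only its parent as a possible neighbour
in `S`. -/
theorem IsTree.exists_mem_neighborSet_inter_subsingleton (hG : G.IsTree) (S : Finset V)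
    (hS : S.Nonempty) : ∃ ℓ ∈ S, (G.neighborSet ℓ ∩ S).Subsingleton := by
  obtain ⟨r⟩ := hG.connected.nonempty
  obtain ⟨ℓ, hℓS, hmax⟩ := S.exists_max_image (G.dist r) hS
  have hparent : ∀ w ∈ G.neighborSet ℓ ∩ S, G.dist r w + 1 = G.dist r ℓ := fun w ⟨hw, hwS⟩ =>
    (hG.dist_eq_dist_add_one_of_adj r hw).resolve_right (by have := hmax w hwS; omega) |>.symm
  exact ⟨ℓ, hℓS, fun w hw w' hw' => hG.eq_of_adj_of_dist_add_one_eq hw.1.symm hw'.1.symm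
    (hparent w hw) (hparent w' hw')⟩

section Coloring

variable [DecidableEq κ] {Δ : ℕ} {C : V → Finset κ} {S : Set V}

theorem IsDissociationColoringOn.exists_free_color {S : Finset V}
    (hC : G.IsDissociationColoringOn Δ C ↑S) {u : V} (hu : u ∈ S)
    (hnbr : (G.neighborSet u ∩ ↑S).ncard < Δ) : ∃ p ∈ C u, ∀ x ∈ S, G.Adj u x → p ∉ C x := by
  classical
  set N := S.filter (G.Adj u)
  have hN : N.card = (G.neighborSet u ∩ ↑S).ncard := by
    rw [← Set.ncard_coe_finset]
    congr 1
    ext x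
    simp [N, and_comm]
  have hblocked : (N.biUnion fun x => C u ∩ C x).card < (C u).card := calc
    _ ≤ ∑ x ∈ N, (C u ∩ C x).card := card_biUnion_le
    _ ≤ ∑ _x ∈ N, 1 := sum_le_sum fun x hx =>
      hC.card_inter_le_one u hu x (mem_filter.1 hx).1 (mem_filter.1 hx).2
    _ < (C u).card := by rw [hC.card_eq u hu, sum_const, smul_eq_mul, mul_one, hN]; exact hnbr
  obtain ⟨p, hpu, hpfree⟩ := exists_mem_notMem_of_card_lt_card hblocked
  refine ⟨p, hpu, fun x hx hux hpx => hpfree ?_⟩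
  exact mem_biUnion.2 ⟨x, mem_filter.2 ⟨hx, hux⟩, mem_inter.2 ⟨hpu, hpx⟩⟩

variable [DecidableEq V]

theorem IsDissociationColoringOn.update_insert (hC : G.IsDissociationColoringOn Δ C S)
    {ℓ : V} {D : Finset κ} (hD : D.card = Δ) (hℓ : (G.neighborSet ℓ ∩ S).Subsingleton)
    (hcompat : ∀ w ∈ S, G.Adj ℓ w →
      (D ∩ C w).card ≤ 1 ∧ ∀ s ∈ D ∩ C w, ∀ x ∈ S, G.Adj w x → s ∉ C x) :
    G.IsDissociationColoringOn Δ (Function.update C ℓ D) (insert ℓ S) := by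
  have hC' : ∀ v, v ≠ ℓ → Function.update C ℓ D v = C v := fun v hv =>
    Function.update_of_ne hv _ _
  refine ⟨fun v hv => ?_, fun v hv w hw hvw => ?_, fun s v ⟨hv, hsv⟩ => ?_⟩
  · by_cases hvℓ : v = ℓ
    · subst hvℓ
      simpa using hD
    · rw [hC' v hvℓ]
      exact hC.card_eq v (hv.resolve_left hvℓ)
  · by_cases hvℓ : v = ℓ
    · subst hvℓ
      simpa [hC' w hvw.ne'] using (hcompat w (hw.resolve_left hvw.ne') hvw).1
    by_cases hwℓ : w = ℓ
    · subst hwℓ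
      simpa [hC' v hvℓ, Finset.inter_comm] using (hcompat v (hv.resolve_left hvℓ) hvw.symm).1
    simpa [hC' v hvℓ, hC' w hwℓ] using
      hC.card_inter_le_one v (hv.resolve_left hvℓ) w (hw.resolve_left hwℓ) hvw
  · by_cases hvℓ : v = ℓ
    · subst hvℓ
      exact hℓ.anti fun w ⟨hvw, hw, _⟩ => ⟨hvw, hw.resolve_left hvw.ne'⟩
    have hvS : v ∈ S := hv.resolve_left hvℓ
    rw [hC' v hvℓ] at hsv
    by_cases hℓv : G.Adj v ℓ ∧ s ∈ D
    · -- `hcompat` makes `s` free at `v`, so `ℓ` is the only `s`-coloured neighbour of `v`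
      refine (Set.subsingleton_singleton (a := ℓ)).anti fun x ⟨hvx, hx, hsx⟩ => ?_
      by_contra hxℓ
      rw [hC' x hxℓ] at hsx
      exact (hcompat v hvS hℓv.1.symm).2 s (mem_inter.2 ⟨hℓv.2, hsv⟩) x
        (hx.resolve_left hxℓ) hvx hsx
    · refine (hC.isDissociationSet s v ⟨hvS, hsv⟩).anti fun x ⟨hvx, hx, hsx⟩ => ?_
      have hxℓ : x ≠ ℓ := by
        rintro rfl
        exact hℓv ⟨hvx, by simpa using hsx⟩
      rw [hC' x hxℓ] at hsx
      exact ⟨hvx, hx.resolve_left hxℓ, hsx⟩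

theorem IsDissociationColoringOn.exists_update_insert [Fintype V] [Fintype κ] {S : Finset V}
    (hC : G.IsDissociationColoringOn Δ C ↑S) (hκ : Fintype.card κ + 1 = 2 * Δ)
    (hdeg : ∀ v, (G.neighborSet v).ncard ≤ Δ) {ℓ : V} (hℓS : ℓ ∉ S)
    (hℓ : (G.neighborSet ℓ ∩ ↑S).Subsingleton) :
    ∃ D, G.IsDissociationColoringOn Δ (Function.update C ℓ D) (insert ℓ ↑S) := by
  by_cases hnbr : ∃ u ∈ S, G.Adj ℓ u
  · obtain ⟨u, huS, hℓu⟩ := hnbr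
    -- `ℓ` is a further neighbour of `u`
    have hnbru : (G.neighborSet u ∩ ↑S).ncard < Δ := by
      have hsub : insert ℓ (G.neighborSet u ∩ ↑S) ⊆ G.neighborSet u :=
        Set.insert_subset hℓu.symm Set.inter_subset_left
      have := Set.ncard_le_ncard hsub
      rw [Set.ncard_insert_of_notMem (fun h => hℓS h.2)] at this
      exact lt_of_lt_of_le (Nat.lt_succ_self _) (this.trans (hdeg u))
    obtain ⟨p, hpu, hpfree⟩ := hC.exists_free_color huS hnbru
    refine ⟨insert p (C u)ᶜ, hC.update_insert ?_ hℓ fun w hwS hℓw => ?_⟩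
    · rw [card_insert_of_notMem (by simpa using hpu), card_compl, hC.card_eq u huS]
      omega
    · obtain rfl : w = u := hℓ ⟨hℓw, hwS⟩ ⟨hℓu, huS⟩
      have hD : insert p (C w)ᶜ ∩ C w = {p} := by
        rw [insert_inter_of_mem hpu, inter_comm, inter_compl, insert_empty]
      rw [hD]
      exact ⟨(card_singleton p).le, fun s hs => (mem_singleton.1 hs) ▸ hpfree⟩
  · simp only [not_exists, not_and] at hnbr
    obtain ⟨D, -, hD⟩ := exists_subset_card_eq (s := (univ : Finset κ)) (n := Δ)
      (by rw [card_univ]; omega)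
    exact ⟨D, hC.update_insert hD hℓ fun w hwS hℓw => absurd hℓw (hnbr w hwS)⟩

theorem exists_isDissociationColoringOn [Fintype V] [Fintype κ]
    (hκ : Fintype.card κ + 1 = 2 * Δ) (hdeg : ∀ v, (G.neighborSet v).ncard ≤ Δ)
    (hleaf : ∀ S : Finset V, S.Nonempty → ∃ ℓ ∈ S, (G.neighborSet ℓ ∩ ↑S).Subsingleton)
    (S : Finset V) : ∃ C : V → Finset κ, G.IsDissociationColoringOn Δ C ↑S := by
  induction S using Finset.strongInduction with
  | H S ih =>
    obtain rfl | hS := S.eq_empty_or_nonempty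
    · exact ⟨fun _ => ∅, ⟨by simp, by simp, fun _ _ hv => absurd hv.1 (by simp)⟩⟩
    obtain ⟨ℓ, hℓS, hℓ⟩ := hleaf S hS
    obtain ⟨C, hC⟩ := ih (S.erase ℓ) (erase_ssubset hℓS)
    obtain ⟨D, hD⟩ := hC.exists_update_insert hκ hdeg (notMem_erase ℓ S)
      (hℓ.anti (Set.inter_subset_inter_right _ (by simp)))
    refine ⟨Function.update C ℓ D, ?_⟩
    rwa [← coe_insert, insert_erase hℓS] at hD

end Coloring

theorem IsTree.exists_dissociationColoring [Fintype V] [DecidableEq V] [Fintype κ]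
    [DecidableEq κ] {Δ : ℕ} (hG : G.IsTree) (hκ : Fintype.card κ + 1 = 2 * Δ)
    (hdeg : ∀ v, (G.neighborSet v).ncard ≤ Δ) :
    ∃ C : V → Finset κ, (∀ v, (C v).card = Δ) ∧ ∀ s, G.IsDissociationSet {v | s ∈ C v} := by
  obtain ⟨C, hC⟩ := exists_isDissociationColoringOn hκ hdeg
    hG.exists_mem_neighborSet_inter_subsingleton univ
  exact ⟨C, fun v => hC.card_eq v (mem_univ v), fun s => by
    simpa using hC.isDissociationSet s⟩

section MixedStableSet

variable [DecidableEq V]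

def closedNeighborFinsetIn (G : SimpleGraph V) [DecidableRel G.Adj] (U : Finset V) (v : V) :
    Finset V :=
  insert v (U.filter (G.Adj v))

variable [DecidableRel G.Adj] {U : Finset V}

theorem closedNeighborFinsetIn_subset {v : V} (hv : v ∈ U) : G.closedNeighborFinsetIn U v ⊆ U :=
  insert_subset hv (filter_subset _ _)

theorem IsDissociationSet.closedNeighborFinsetIn_eq_pair (hU : G.IsDissociationSet ↑U)
    {v w : V} (hv : v ∈ U) (hw : w ∈ U) (hvw : G.Adj v w) :
    G.closedNeighborFinsetIn U v = {v, w} := by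
  ext x
  simp only [closedNeighborFinsetIn, mem_insert, mem_filter, mem_singleton]
  refine or_congr_right ⟨fun ⟨hx, hvx⟩ => hU v hv ⟨hvx, hx⟩ ⟨hvw, hw⟩, ?_⟩
  rintro rfl
  exact ⟨hw, hvw⟩

theorem IsDissociationSet.closedNeighborFinsetIn_eq (hU : G.IsDissociationSet ↑U) {v x : V}
    (hv : v ∈ U) (hx : x ∈ G.closedNeighborFinsetIn U v) :
    G.closedNeighborFinsetIn U x = G.closedNeighborFinsetIn U v := by
  obtain rfl | hx := mem_insert.1 hx
  · rfl
  obtain ⟨hxU, hvx⟩ := mem_filter.1 hx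
  rw [hU.closedNeighborFinsetIn_eq_pair hv hxU hvx,
    hU.closedNeighborFinsetIn_eq_pair hxU hv hvx.symm, pair_comm]

/-- The witness consists of the closed neighbourhoods inside `U`: the isolated vertices and the
edges of the matching induced by `U`. -/
theorem IsDissociationSet.exists_mixedStableSet (hU : G.IsDissociationSet ↑U)
    {𝒱 : Set (Finset V)} (hvert : ∀ v, ∃ t ∈ 𝒱, v ∈ t)
    (hedge : ∀ v w, G.Adj v w → ∃ t ∈ 𝒱, v ∈ t ∧ w ∈ t) :
    ∃ M, MixedStableSet G 𝒱 M ∧ M.biUnion id = U := by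
  refine ⟨U.image (G.closedNeighborFinsetIn U), ⟨?_, ?_, ?_⟩, ?_⟩
  · simp only [mem_image]
    rintro _ ⟨v, hv, rfl⟩
    by_cases hnbr : ∃ w ∈ U, G.Adj v w
    · obtain ⟨w, hw, hvw⟩ := hnbr
      obtain ⟨t, ht, hvt, hwt⟩ := hedge v w hvw
      rw [hU.closedNeighborFinsetIn_eq_pair hv hw hvw]
      exact ⟨t, ht, insert_subset hvt (singleton_subset_iff.2 hwt)⟩
    · obtain ⟨t, ht, hvt⟩ := hvert v
      refine ⟨t, ht, insert_subset hvt fun x hx => ?_⟩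
      exact absurd ⟨x, (mem_filter.1 hx).1, (mem_filter.1 hx).2⟩ hnbr
  · simp only [mem_image]
    rintro _ ⟨v, hv, rfl⟩ _ ⟨w, hw, rfl⟩ hne
    refine Finset.disjoint_left.2 fun x hxv hxw => hne ?_
    rw [← hU.closedNeighborFinsetIn_eq hv hxv, hU.closedNeighborFinsetIn_eq hw hxw]
  · simp only [mem_image]
    rintro _ ⟨v, hv, rfl⟩ _ ⟨w, hw, rfl⟩ hne x hxv y hyw hxy
    have hxU := closedNeighborFinsetIn_subset hv hxv
    have hyU := closedNeighborFinsetIn_subset hw hyw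
    refine hne ?_
    rw [← hU.closedNeighborFinsetIn_eq hv hxv, ← hU.closedNeighborFinsetIn_eq hw hyw,
      hU.closedNeighborFinsetIn_eq_pair hxU hyU hxy,
      hU.closedNeighborFinsetIn_eq_pair hyU hxU hxy.symm, pair_comm]
  · refine Subset.antisymm (biUnion_subset.2 ?_) fun v hv => mem_biUnion.2 ?_
    · simp only [mem_image]
      rintro _ ⟨v, hv, rfl⟩
      exact closedNeighborFinsetIn_subset hv
    · exact ⟨_, mem_image_of_mem _ hv, mem_insert_self v _⟩

end MixedStableSet

end SimpleGraph

section PackGraph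

variable {m n q : ℕ} {A : Matrix (Fin m) (Fin n) ℚ} {b : Fin m → ℚ} {L : Finset (Fin n)}
  {π : Fin n → Fin q}

theorem exists_rowBlocks_of_packGraph_adj {u v : Fin q} (huv : (packGraph A π).Adj u v) :
    ∃ t ∈ Set.range (rowBlocks A π), u ∈ t ∧ v ∈ t := by
  obtain ⟨-, i, j, j', rfl, rfl, hj, hj'⟩ := huv
  exact ⟨_, ⟨i, rfl⟩, mem_rowBlocks.2 ⟨j, rfl, hj⟩, mem_rowBlocks.2 ⟨j', rfl, hj'⟩⟩

theorem exists_rowBlocks_of_preconnected (hG : (packGraph A π).Preconnected) {v w : Fin q}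
    (hvw : (packGraph A π).Adj v w) (u : Fin q) : ∃ t ∈ Set.range (rowBlocks A π), u ∈ t := by
  have : Nontrivial (Fin q) := ⟨⟨v, w, hvw.ne⟩⟩
  obtain ⟨w, hw⟩ := hG.exists_adj_of_nontrivial u
  obtain ⟨t, ht, hut, -⟩ := exists_rowBlocks_of_packGraph_adj hw
  exact ⟨t, ht, hut⟩

theorem sum_dotp_blockPart_le_of_isDissociationSet (hA : ∀ i j, 0 ≤ A i j) (hb : ∀ i, 0 ≤ b i)
    (hrow : ∀ u, ∃ t ∈ Set.range (rowBlocks A π), u ∈ t) {c x : Fin n → ℚ}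
    (hx : x ∈ naturalSparseClosure A b L π) {U : Finset (Fin q)}
    (hU : (packGraph A π).IsDissociationSet ↑U) {z : ℚ} (hz : ∀ y ∈ mipSet A b L, dotp c y ≤ z) :
    ∑ u ∈ U, dotp (blockPart π {u} c) x ≤ z := by
  classical
  obtain ⟨M, hM, rfl⟩ :=
    hU.exists_mixedStableSet hrow fun _ _ => exists_rowBlocks_of_packGraph_adj
  rw [sum_biUnion (t := id) fun S hS T hT hST => hM.2.1 S hS T hT hST]
  simp only [id, sum_dotp_blockPart_singleton]
  exact sum_dotp_blockPart_le_of_mem_naturalSparseClosure hA hb hx hM hz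

end PackGraph

theorem packing_naturalSparse_tree_bound_general
    {m n q : ℕ}
    (A : Matrix (Fin m) (Fin n) ℚ) (b : Fin m → ℚ) (c : Fin n → ℚ) (L : Finset (Fin n))
    (hA : ∀ i j, 0 ≤ A i j) (hb : ∀ i, 0 ≤ b i)
    (π : Fin n → Fin q)
    (htree : (packGraph A π).IsTree)
    (Δ : ℕ) (hΔ : 1 ≤ Δ)
    (hdegle : ∀ v, ((packGraph A π).neighborSet v).ncard ≤ Δ)
    (hdegeq : ∃ v, ((packGraph A π).neighborSet v).ncard = Δ)
    (xI : Fin n → ℚ)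
    (hxImax : ∀ x ∈ intHull A b L, dotp c x ≤ dotp c xI) :
    ∀ x ∈ naturalSparseClosure A b L π,
      dotp c x ≤ ((2 * (Δ : ℚ) - 1) / (Δ : ℚ)) * dotp c xI := by
  classical
  intro x hx
  set f : Fin q → ℚ := fun u => dotp (blockPart π {u} c) x
  obtain ⟨v, hv⟩ := hdegeq
  obtain ⟨w, hvw⟩ := Set.nonempty_of_ncard_ne_zero (s := (packGraph A π).neighborSet v)
    (by omega)
  have hrow := exists_rowBlocks_of_preconnected htree.connected.preconnected hvw
  obtain ⟨C, hCcard, hCdiss⟩ := htree.exists_dissociationColoring (κ := Fin (2 * Δ - 1))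
    (by rw [Fintype.card_fin]; omega) hdegle
  have hcolor (s) : ∑ v ∈ univ.filter (s ∈ C ·), f v ≤ dotp c xI :=
    sum_dotp_blockPart_le_of_isDissociationSet hA hb hrow hx (by simpa using hCdiss s)
      fun y hy => hxImax y (subset_convexHull ℚ _ hy)
  have hcount : (Δ : ℚ) * dotp c x ≤ (2 * Δ - 1 : ℕ) * dotp c xI := calc
    (Δ : ℚ) * dotp c x = ∑ v, ∑ _s ∈ C v, f v := by
      simp only [sum_const, hCcard, nsmul_eq_mul, ← mul_sum, f, sum_dotp_blockPart_singleton,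
        blockPart_univ]
    _ = ∑ s, ∑ v ∈ univ.filter (s ∈ C ·), f v := sum_comm' (by simp)
    _ ≤ ∑ _s : Fin (2 * Δ - 1), dotp c xI := sum_le_sum fun s _ => hcolor s
    _ = (2 * Δ - 1 : ℕ) * dotp c xI := by simp
  rw [Nat.cast_sub (by omega), Nat.cast_mul, Nat.cast_ofNat, Nat.cast_one] at hcount
  rw [div_mul_eq_mul_div, le_div_iff₀ (by positivity)]
  linarith

/-- **Theorem (natural sparse closure of trees).** If the packing interaction graph is a
tree with maximum degree `Δ ≥ 1`, then `z^{N.S.} ≤ ((2Δ - 1)/Δ) · z^I`. -/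
theorem packing_naturalSparse_tree_bound
    {m n q : ℕ}
    (A : Matrix (Fin m) (Fin n) ℚ) (b : Fin m → ℚ) (c : Fin n → ℚ) (L : Finset (Fin n))
    (hA : ∀ i j, 0 ≤ A i j) (hb : ∀ i, 0 ≤ b i) (hc : ∀ j, 0 ≤ c j)
    (π : Fin n → Fin q) (hπ : Function.Surjective π)
    (htree : (packGraph A π).IsTree)
    (Δ : ℕ) (hΔ : 1 ≤ Δ)
    (hdegle : ∀ v, ((packGraph A π).neighborSet v).ncard ≤ Δ)
    (hdegeq : ∃ v, ((packGraph A π).neighborSet v).ncard = Δ)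
    (xI : Fin n → ℚ) (hxI : xI ∈ intHull A b L)
    (hxImax : ∀ x ∈ intHull A b L, dotp c x ≤ dotp c xI) :
    ∀ x ∈ naturalSparseClosure A b L π,
      dotp c x ≤ ((2 * (Δ : ℚ) - 1) / (Δ : ℚ)) * dotp c xI :=
  packing_naturalSparse_tree_bound_general A b c L hA hb π htree Δ hΔ hdegle hdegeq xI hxImax
end

section
/- Let the optimization problem be max c^T x subject to Ax ≤ b, x_j ∈ ℤ_+ for j ∈ L, x_j ∈ ℝ_+ for j ∈ [n]∖L, with arbitrary A ∈ ℚ^{m×n}, b ∈ ℚ^m, and c ∈ ℚ_+^n. Let J be a partition of the column index set [n] and let G^{pack}_{A,J} = (V,E) be the packing interaction graph. If the instance is feasible, then for any support list 𝒱 covering all vertices, z^{𝒱,P} ≤ |V| · z^I. -/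
open Finset

def blockRestrict {n : ℕ} {ι : Type*} [DecidableEq ι] (π : Fin n → ι) (u : ι)
    (c : Fin n → ℚ) : Fin n → ℚ :=
  fun j => if π j = u then c j else 0

lemma blockRestrict_le {n : ℕ} {ι : Type*} [DecidableEq ι] (π : Fin n → ι) (u : ι)
    {c : Fin n → ℚ} (hc : 0 ≤ c) : blockRestrict π u c ≤ c := by
  intro j
  unfold blockRestrict
  split_ifs
  exacts [le_rfl, hc j]

lemma eq_of_blockRestrict_ne_zero {n : ℕ} {ι : Type*} [DecidableEq ι] (π : Fin n → ι)
    (u : ι) (c : Fin n → ℚ) {j : Fin n} (hj : blockRestrict π u c j ≠ 0) : π j = u := by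
  by_contra h
  exact hj (if_neg h)

lemma sum_dotp_blockRestrict {n : ℕ} {ι : Type*} [Fintype ι] [DecidableEq ι]
    (π : Fin n → ι) (c x : Fin n → ℚ) :
    ∑ u, dotp (blockRestrict π u c) x = dotp c x := by
  unfold dotp blockRestrict
  rw [Finset.sum_comm]
  refine Finset.sum_congr rfl fun j _ => ?_
  simp only [ite_mul, zero_mul, Finset.sum_ite_eq, Finset.mem_univ, if_true]

lemma dotp_le_dotp_of_le {n : ℕ} {α c x : Fin n → ℚ} (hαc : α ≤ c) (hx : 0 ≤ x) :
    dotp α x ≤ dotp c x :=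
  Finset.sum_le_sum fun j _ => mul_le_mul_of_nonneg_right (hαc j) (hx j)

lemma intHull_subset_nonneg {m n : ℕ} (A : Matrix (Fin m) (Fin n) ℚ) (b : Fin m → ℚ)
    (L : Finset (Fin n)) : intHull A b L ⊆ Set.Ici 0 :=
  convexHull_min (fun _ hx => hx.2.1) (convex_Ici 0)

lemma dotp_le_of_mem_sparseClosure {m n : ℕ} {A : Matrix (Fin m) (Fin n) ℚ} {b : Fin m → ℚ}
    {L : Finset (Fin n)} {N : Set (Fin n)} {x : Fin n → ℚ} (hx : x ∈ sparseClosure A b L N)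
    {α : Fin n → ℚ} {β : ℚ} (hvalid : ∀ y ∈ intHull A b L, dotp α y ≤ β)
    (hsupp : ∀ j, α j ≠ 0 → j ∈ N) : dotp α x ≤ β := by
  have hcuts := hx.2
  simp only [Set.mem_iInter] at hcuts
  exact hcuts α β ⟨hvalid, hsupp⟩

/-- Since `c ≥ 0` and `P^I ≥ 0`, the part `c^u` of the objective on the block `J_u` is
bounded by `z^I` on `P^I`, so `c^u x ≤ z^I` is a sparse cut on any `S ∋ u`. -/
lemma dotp_blockRestrict_le_of_mem_listClosure {m n q : ℕ} {A : Matrix (Fin m) (Fin n) ℚ}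
    {b : Fin m → ℚ} {L : Finset (Fin n)} {π : Fin n → Fin q} {𝒱 : Finset (Finset (Fin q))}
    {c xI x : Fin n → ℚ} (hc : 0 ≤ c) (hxImax : ∀ y ∈ intHull A b L, dotp c y ≤ dotp c xI)
    (hx : x ∈ listClosure A b L π 𝒱) {u : Fin q} {S : Finset (Fin q)} (hS : S ∈ 𝒱)
    (huS : u ∈ S) : dotp (blockRestrict π u c) x ≤ dotp c xI := by
  have hxS : x ∈ blockClosure A b L π S := Set.mem_iInter₂.mp hx S hS
  refine dotp_le_of_mem_sparseClosure hxS (fun y hy => ?_) fun j hj => ?_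
  · exact (dotp_le_dotp_of_le (blockRestrict_le π u hc) (intHull_subset_nonneg A b L hy)).trans
      (hxImax y hy)
  · show π j ∈ S
    rwa [eq_of_blockRestrict_ne_zero π u c hj]

theorem arbitrary_packing_listClosure_card_bound_general
    {m n q : ℕ}
    (A : Matrix (Fin m) (Fin n) ℚ) (b : Fin m → ℚ) (c : Fin n → ℚ) (L : Finset (Fin n))
    (hc : ∀ j, 0 ≤ c j)
    (π : Fin n → Fin q)
    (𝒱 : Finset (Finset (Fin q)))
    (hcover : ∀ v : Fin q, ∃ S ∈ 𝒱, v ∈ S)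
    (xI : Fin n → ℚ)
    (hxImax : ∀ x ∈ intHull A b L, dotp c x ≤ dotp c xI) :
    ∀ x ∈ listClosure A b L π 𝒱, dotp c x ≤ (q : ℚ) * dotp c xI := by
  intro x hx
  calc dotp c x = ∑ u, dotp (blockRestrict π u c) x := (sum_dotp_blockRestrict π c x).symm
    _ ≤ ∑ _u : Fin q, dotp c xI := Finset.sum_le_sum fun u _ => by
        obtain ⟨S, hS, huS⟩ := hcover u
        exact dotp_blockRestrict_le_of_mem_listClosure hc hxImax hx hS huS
    _ = q * dotp c xI := by simp

/-- **Corollary (packing-type problems with arbitrary `A`).** Let the problem be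
`max cᵀx, Ax ≤ b, x ≥ 0` (integrality on `L`) with arbitrary `A, b` and `c ≥ 0`.  If the
instance is feasible, then for any support list `𝒱` covering all vertices of the packing
interaction graph, `z^{𝒱,P} ≤ |V| · z^I`. -/
theorem arbitrary_packing_listClosure_card_bound
    {m n q : ℕ}
    (A : Matrix (Fin m) (Fin n) ℚ) (b : Fin m → ℚ) (c : Fin n → ℚ) (L : Finset (Fin n))
    (hc : ∀ j, 0 ≤ c j)
    (π : Fin n → Fin q) (hπ : Function.Surjective π)
    (hfeas : (mipSet A b L).Nonempty)
    (𝒱 : Finset (Finset (Fin q)))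
    (hcover : ∀ v : Fin q, ∃ S ∈ 𝒱, v ∈ S)
    (xI : Fin n → ℚ) (hxI : xI ∈ intHull A b L)
    (hxImax : ∀ x ∈ intHull A b L, dotp c x ≤ dotp c xI) :
    ∀ x ∈ listClosure A b L π 𝒱, dotp c x ≤ (q : ℚ) * dotp c xI :=
  arbitrary_packing_listClosure_card_bound_general A b c L hc π 𝒱 hcover xI hxImax
end
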